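/- arXiv:1809.09497 — 11 statements merged into one kernel-verified Lean document; each statement's English description precedes it below -/
import Mathlib

section
/- Let G = Q₈ with generators σ, τ as usual, and let s, t ∈ {σ, τ} with s ≠ t. The subgroup E_{s,t} of Perm(G) generated by λ(s)ρ(t), λ(s²), and λ(t)ρ(st) is isomorphic to C₂ × C₂ × C₂. -/
abbrev G : Type := QuaternionGroup 2
def σ : G := QuaternionGroup.a 1
def τ : G := QuaternionGroup.xa 0
def lam (g : G) : Equiv.Perm G := Equiv.mulLeft g
def rho (g : G) : Equiv.Perm G := Equiv.mulRight g⁻¹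
def Est (s t : G) : Subgroup (Equiv.Perm G) :=
  Subgroup.closure {lam s * rho t, lam (s^2), lam t * rho (s*t)}
def Ast (s t : G) : Subgroup (Equiv.Perm G) :=
  Subgroup.closure {lam s, rho t}
def eta (s t : G) : Equiv.Perm G :=
  List.formPerm [1, s, t, (s*t)⁻¹, s^2, s⁻¹, t⁻¹, s*t]
def Cst (s t : G) : Subgroup (Equiv.Perm G) :=
  Subgroup.closure {eta s t}
def Dsl (s t : G) : Subgroup (Equiv.Perm G) :=
  Subgroup.closure {lam s, lam t * rho s}
def Dsr (s t : G) : Subgroup (Equiv.Perm G) :=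
  Subgroup.closure {rho s, lam s * rho t}
def lamG : Subgroup (Equiv.Perm G) := Subgroup.closure (Set.range lam)
def rhoG : Subgroup (Equiv.Perm G) := Subgroup.closure (Set.range rho)
/-- `f` is `G`-equivariant for the conjugation action of `G` via `lam`. -/
def Equivariant {N₁ N₂ : Subgroup (Equiv.Perm G)} (f : N₁ ≃* N₂) : Prop :=
  ∀ (g : G) (η : Equiv.Perm G) (hη : η ∈ N₁) (hη' : lam g * η * (lam g)⁻¹ ∈ N₁),
    (f ⟨lam g * η * (lam g)⁻¹, hη'⟩ : Equiv.Perm G)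
      = lam g * (f ⟨η, hη⟩ : Equiv.Perm G) * (lam g)⁻¹

def invHom (x : Equiv.Perm G) (hx : x ^ 2 = 1) : Multiplicative (ZMod 2) →* Equiv.Perm G where
  toFun p := x ^ (Multiplicative.toAdd p).val
  map_one' := by simp
  map_mul' p q := by
    have key : ∀ n : ℕ, x ^ n = x ^ (n % 2) := by
      intro n
      conv_lhs => rw [← Nat.div_add_mod n 2]
      rw [pow_add, pow_mul, hx, one_pow, one_mul]
    show x ^ (Multiplicative.toAdd p + Multiplicative.toAdd q).val = _
    rw [ZMod.val_add, ← key, pow_add]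

lemma iso_of_three (a b c : Equiv.Perm G) (ha : a ^ 2 = 1) (hb : b ^ 2 = 1) (hc : c ^ 2 = 1)
    (hab : Commute a b) (hac : Commute a c) (hbc : Commute b c)
    (hind : ∀ i j k : ZMod 2, a ^ i.val * (b ^ j.val * c ^ k.val) = 1 → i = 0 ∧ j = 0 ∧ k = 0) :
    Nonempty (↥(Subgroup.closure {a, b, c}) ≃*
      (Multiplicative (ZMod 2) × Multiplicative (ZMod 2) × Multiplicative (ZMod 2))) := by
  set f : Multiplicative (ZMod 2) × Multiplicative (ZMod 2) × Multiplicative (ZMod 2)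
      →* Equiv.Perm G :=
    (invHom a ha).noncommCoprod ((invHom b hb).noncommCoprod (invHom c hc)
      (fun m n => (hbc.pow_pow _ _))) (by
        rintro m ⟨n₁, n₂⟩
        exact ((hab.pow_pow _ _).mul_right (hac.pow_pow _ _))) with hf
  have feval : ∀ p, f p = a ^ (Multiplicative.toAdd p.1).val *
      (b ^ (Multiplicative.toAdd p.2.1).val * c ^ (Multiplicative.toAdd p.2.2).val) :=
    fun p => rfl
  have hinj : Function.Injective f := by
    rw [injective_iff_map_eq_one]
    rintro ⟨x, y, z⟩ h
    rw [feval] at h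
    obtain ⟨h1, h2, h3⟩ := hind _ _ _ h
    refine Prod.ext ?_ (Prod.ext ?_ ?_) <;> simpa using (by assumption)
  have hrange : f.range = Subgroup.closure {a, b, c} := by
    apply le_antisymm
    · rintro _ ⟨⟨x, y, z⟩, rfl⟩
      rw [feval]
      have hac' : a ∈ Subgroup.closure ({a, b, c} : Set (Equiv.Perm G)) :=
        Subgroup.subset_closure (by simp)
      have hbc' : b ∈ Subgroup.closure ({a, b, c} : Set (Equiv.Perm G)) :=
        Subgroup.subset_closure (by simp)
      have hcc' : c ∈ Subgroup.closure ({a, b, c} : Set (Equiv.Perm G)) :=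
        Subgroup.subset_closure (by simp)
      exact mul_mem (pow_mem hac' _) (mul_mem (pow_mem hbc' _) (pow_mem hcc' _))
    · rw [Subgroup.closure_le]
      rintro x (rfl | rfl | rfl)
      · exact ⟨(Multiplicative.ofAdd 1, 1, 1), by rw [feval]; simp; rfl⟩
      · exact ⟨(1, Multiplicative.ofAdd 1, 1), by rw [feval]; simp; rfl⟩
      · exact ⟨(1, 1, Multiplicative.ofAdd 1), by rw [feval]; simp; rfl⟩
  exact ⟨(MulEquiv.subgroupCongr hrange.symm).trans (MonoidHom.ofInjective hinj).symm⟩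

theorem stmt1 (s t : G) (hs : s ∈ ({σ, τ} : Set G)) (ht : t ∈ ({σ, τ} : Set G)) (hst : s ≠ t) :
    Nonempty (↥(Est s t) ≃*
      (Multiplicative (ZMod 2) × Multiplicative (ZMod 2) × Multiplicative (ZMod 2))) := by
  have hcase : (s = σ ∧ t = τ) ∨ (s = τ ∧ t = σ) := by
    rcases hs with rfl | rfl <;> rcases ht with rfl | rfl <;> first | exact absurd rfl hst |
      simp
  unfold Est
  rcases hcase with ⟨rfl, rfl⟩ | ⟨rfl, rfl⟩ <;>
    exact iso_of_three _ _ _ (by decide) (by decide) (by decide) (by unfold Commute SemiconjBy; decide) (by unfold Commute SemiconjBy; decide)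
      (by unfold Commute SemiconjBy; decide) (by decide)
end

section
/- Let G = Q₈ and let s, t ∈ {σ, τ} with s ≠ t. The subgroup E_{s,t} = ⟨λ(s)ρ(t), λ(s²), λ(t)ρ(st)⟩ of Perm(G) is a regular subgroup: it has order 8 and acts transitively on G with trivial point stabilizers. -/
set_option maxRecDepth 10000

/-- The list of the eight elements of `Est s t`. -/
def EL (s t : G) : List (Equiv.Perm G) :=
  [1, lam s * rho t, lam (s^2), lam t * rho (s*t),
   (lam s * rho t) * lam (s^2), (lam s * rho t) * (lam t * rho (s*t)),
   lam (s^2) * (lam t * rho (s*t)),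
   (lam s * rho t) * lam (s^2) * (lam t * rho (s*t))]

lemma key (s t : G)
    (hmul : ∀ x ∈ EL s t, ∀ y ∈ EL s t, ∃ z ∈ EL s t, ∀ g : G, z g = (x * y) g)
    (hinv : ∀ x ∈ EL s t, ∃ z ∈ EL s t, ∀ g : G, z g = x⁻¹ g)
    (hnd : ((EL s t).map (fun f => f 1)).Nodup)
    (htrans : ∀ x y : G, ∃ η ∈ EL s t, η x = y)
    (hstab : ∀ η ∈ EL s t, ∀ x : G, η x = x → ∀ y : G, η y = y) :
    Nat.card ↥(Est s t) = 8 ∧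
      (∀ x y : G, ∃ η ∈ Est s t, η x = y) ∧
      (∀ η ∈ Est s t, ∀ x : G, η x = x → η = 1) := by
  classical
  let H : Subgroup (Equiv.Perm G) :=
    { carrier := {x | x ∈ EL s t}
      one_mem' := by simp [EL]
      mul_mem' := fun {a b} ha hb => by
        obtain ⟨z, hz, hz2⟩ := hmul a ha b hb
        have : z = a * b := Equiv.ext hz2
        exact this ▸ hz
      inv_mem' := fun {a} ha => by
        obtain ⟨z, hz, hz2⟩ := hinv a ha
        have : z = a⁻¹ := Equiv.ext hz2
        exact this ▸ hz }
  have hmemH : ∀ x, x ∈ H ↔ x ∈ EL s t := fun x => Iff.rfl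
  have hEH : Est s t = H := by
    apply le_antisymm
    · apply (Subgroup.closure_le _).mpr
      intro x hx
      rcases hx with h | h | h <;> subst h <;>
        simp only [SetLike.mem_coe, hmemH, EL] <;> simp
    · intro x hx
      have ha : lam s * rho t ∈ Est s t := Subgroup.subset_closure (by left; rfl)
      have hb : lam (s^2) ∈ Est s t := Subgroup.subset_closure (by right; left; rfl)
      have hc : lam t * rho (s*t) ∈ Est s t :=
        Subgroup.subset_closure (by right; right; rfl)
      rw [hmemH] at hx
      simp only [EL, List.mem_cons, List.not_mem_nil, or_false] at hx
      rcases hx with h|h|h|h|h|h|h|h <;> subst h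
      · exact one_mem _
      · exact ha
      · exact hb
      · exact hc
      · exact mul_mem ha hb
      · exact mul_mem ha hc
      · exact mul_mem hb hc
      · exact mul_mem (mul_mem ha hb) hc
  have hndE : (EL s t).Nodup := hnd.of_map _
  refine ⟨?_, ?_, ?_⟩
  · rw [hEH]
    have h1 : Nat.card ↥H = ((H : Set (Equiv.Perm G))).ncard :=
      (Nat.card_coe_set_eq _).symm
    have h2 : (H : Set (Equiv.Perm G)) = ↑(EL s t).toFinset := by
      ext x; simp [List.mem_toFinset, hmemH]
    rw [h1, h2, Set.ncard_coe_finset, List.toFinset_card_of_nodup hndE]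
    rfl
  · intro x y
    obtain ⟨η, hη, hxy⟩ := htrans x y
    exact ⟨η, by rw [hEH, hmemH]; exact hη, hxy⟩
  · intro η hη x hx
    rw [hEH, hmemH] at hη
    exact Equiv.ext (hstab η hη x hx)

theorem stmt2 (s t : G) (hs : s ∈ ({σ, τ} : Set G)) (ht : t ∈ ({σ, τ} : Set G)) (hst : s ≠ t) :
    Nat.card ↥(Est s t) = 8 ∧
      (∀ x y : G, ∃ η ∈ Est s t, η x = y) ∧
      (∀ η ∈ Est s t, ∀ x : G, η x = x → η = 1) := by
  rcases hs with rfl | rfl <;> rcases ht with rfl | rfl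
  · exact absurd rfl hst
  · refine key σ τ ?_ ?_ (by decide) ?_ ?_
    · intro x hx y hy
      simp only [EL, List.mem_cons, List.not_mem_nil, or_false] at hx hy
      rcases hx with rfl|rfl|rfl|rfl|rfl|rfl|rfl|rfl <;>
        rcases hy with rfl|rfl|rfl|rfl|rfl|rfl|rfl|rfl <;> decide
    · intro x hx
      simp only [EL, List.mem_cons, List.not_mem_nil, or_false] at hx
      rcases hx with rfl|rfl|rfl|rfl|rfl|rfl|rfl|rfl <;> decide
    · intro x y; fin_cases x <;> fin_cases y <;> decide
    · intro η hη
      simp only [EL, List.mem_cons, List.not_mem_nil, or_false] at hη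
      rcases hη with rfl|rfl|rfl|rfl|rfl|rfl|rfl|rfl <;> decide
  · refine key τ σ ?_ ?_ (by decide) ?_ ?_
    · intro x hx y hy
      simp only [EL, List.mem_cons, List.not_mem_nil, or_false] at hx hy
      rcases hx with rfl|rfl|rfl|rfl|rfl|rfl|rfl|rfl <;>
        rcases hy with rfl|rfl|rfl|rfl|rfl|rfl|rfl|rfl <;> decide
    · intro x hx
      simp only [EL, List.mem_cons, List.not_mem_nil, or_false] at hx
      rcases hx with rfl|rfl|rfl|rfl|rfl|rfl|rfl|rfl <;> decide
    · intro x y; fin_cases x <;> fin_cases y <;> decide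
    · intro η hη
      simp only [EL, List.mem_cons, List.not_mem_nil, or_false] at hη
      rcases hη with rfl|rfl|rfl|rfl|rfl|rfl|rfl|rfl <;> decide
  · exact absurd rfl hst
end

section
/- Let G = Q₈ and let s, t ∈ {σ, τ} with s ≠ t. The subgroup E_{s,t} = ⟨λ(s)ρ(t), λ(s²), λ(t)ρ(st)⟩ of Perm(G) is normalized by the image λ(G) of the left regular representation. -/
lemma lam_mul' (g h : G) : lam (g * h) = lam g * lam h := by
  ext x; simp [lam, mul_assoc]

lemma lam_inv' (g : G) : (lam g)⁻¹ = lam g⁻¹ := by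
  ext x; simp [lam]

lemma conj_lam_rho (g a b : G) :
    lam g * (lam a * rho b) * (lam g)⁻¹ = lam (g * a * g⁻¹) * rho b := by
  ext x; simp [lam, rho, mul_assoc]

lemma conj_lam (g a : G) :
    lam g * lam a * (lam g)⁻¹ = lam (g * a * g⁻¹) := by
  ext x; simp [lam, mul_assoc]

lemma key_lemma (s t g : G) (hs2 : t ^ 2 = s ^ 2) (hs4 : s ^ 4 = 1)
    (hcs : g * s * g⁻¹ = s ∨ g * s * g⁻¹ = s⁻¹)
    (hct : g * t * g⁻¹ = t ∨ g * t * g⁻¹ = t⁻¹) :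
    ∀ η ∈ Est s t, lam g * η * (lam g)⁻¹ ∈ Est s t := by
  have ha : lam s * rho t ∈ Est s t :=
    Subgroup.subset_closure (by simp [Set.mem_insert_iff])
  have hb : lam (s ^ 2) ∈ Est s t :=
    Subgroup.subset_closure (by simp [Set.mem_insert_iff])
  have hc : lam t * rho (s * t) ∈ Est s t :=
    Subgroup.subset_closure (by simp [Set.mem_insert_iff])
  have hgen : ∀ x ∈ ({lam s * rho t, lam (s^2), lam t * rho (s*t)} : Set (Equiv.Perm G)),
      lam g * x * (lam g)⁻¹ ∈ Est s t := by
    intro x hx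
    rcases hx with rfl | rfl | rfl
    · rw [conj_lam_rho]
      rcases hcs with h | h
      · rw [h]; exact ha
      · rw [h]
        have : lam s⁻¹ * rho t = (lam (s ^ 2))⁻¹ * (lam s * rho t) := by
          rw [lam_inv', ← mul_assoc, ← lam_mul']
          congr 2
          group
        rw [this]
        exact (Est s t).mul_mem ((Est s t).inv_mem hb) ha
    · rw [conj_lam]
      have : g * s ^ 2 * g⁻¹ = s ^ 2 := by
        have : g * s ^ 2 * g⁻¹ = (g * s * g⁻¹) ^ 2 := by rw [sq, sq]; group
        rw [this]
        rcases hcs with h | h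
        · rw [h]
        · rw [h]
          have : s⁻¹ ^ 2 = s ^ 2 * (s ^ 4)⁻¹ := by group
          rw [this, hs4]; group
      rw [this]; exact hb
    · rw [conj_lam_rho]
      rcases hct with h | h
      · rw [h]; exact hc
      · rw [h]
        have : lam t⁻¹ * rho (s * t) = (lam (s ^ 2))⁻¹ * (lam t * rho (s * t)) := by
          rw [lam_inv', ← mul_assoc, ← lam_mul']
          congr 2
          rw [← hs2]; group
        rw [this]
        exact (Est s t).mul_mem ((Est s t).inv_mem hb) hc
  intro η hη
  induction hη using Subgroup.closure_induction'' with
  | one => simpa using (Est s t).one_mem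
  | mem x hx => exact hgen x hx
  | inv_mem x hx =>
    have : lam g * x⁻¹ * (lam g)⁻¹ = (lam g * x * (lam g)⁻¹)⁻¹ := by group
    rw [this]
    exact (Est s t).inv_mem (hgen x hx)
  | mul x y hx hy ihx ihy =>
    have : lam g * (x * y) * (lam g)⁻¹
        = (lam g * x * (lam g)⁻¹) * (lam g * y * (lam g)⁻¹) := by group
    rw [this]
    exact (Est s t).mul_mem ihx ihy

theorem stmt3 (s t : G) (hs : s ∈ ({σ, τ} : Set G)) (ht : t ∈ ({σ, τ} : Set G)) (hst : s ≠ t) :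
    ∀ g : G, ∀ η ∈ Est s t, lam g * η * (lam g)⁻¹ ∈ Est s t := by
  intro g
  rcases hs with rfl | rfl <;> rcases ht with rfl | rfl
  · exact absurd rfl hst
  · exact key_lemma _ _ g (by decide) (by decide) (by revert g; decide) (by revert g; decide)
  · exact key_lemma _ _ g (by decide) (by decide) (by revert g; decide) (by revert g; decide)
  · exact absurd rfl hst
end

section
/- Let G = Q₈ and let s, t ∈ {σ, τ, στ} with s ≠ t. The subgroup A_{s,t} = ⟨λ(s), ρ(t)⟩ of Perm(G) is isomorphic to C₄ × C₂. -/
private lemma pow_mod' {M : Type*} [Monoid M] (x : M) {n : ℕ} (h : x ^ n = 1) (m : ℕ) :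
    x ^ (m % n) = x ^ m := by
  conv_rhs => rw [← Nat.mod_add_div m n]
  rw [pow_add, pow_mul, h, one_pow, mul_one]

private def phi (x y : Equiv.Perm G) (hx : x ^ 4 = 1) (hy : y ^ 2 = 1)
    (hc : Commute x y) : Multiplicative (ZMod 4) × Multiplicative (ZMod 2) →* Equiv.Perm G :=
  MonoidHom.mk' (fun p => x ^ (p.1.toAdd).val * y ^ (p.2.toAdd).val) (by
    rintro ⟨a, b⟩ ⟨c, d⟩
    show x ^ (a.toAdd + c.toAdd).val * y ^ (b.toAdd + d.toAdd).val
        = x ^ a.toAdd.val * y ^ b.toAdd.val * (x ^ c.toAdd.val * y ^ d.toAdd.val)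
    rw [ZMod.val_add, ZMod.val_add, pow_mod' x hx, pow_mod' y hy, pow_add, pow_add,
      (hc.pow_pow c.toAdd.val b.toAdd.val).mul_mul_mul_comm])

private lemma iso_of (x z : Equiv.Perm G) (hx : x ^ 4 = 1) (hy : (x⁻¹ * z) ^ 2 = 1)
    (hc : x * (x⁻¹ * z) = (x⁻¹ * z) * x)
    (hinj : Function.Injective fun p : ZMod 4 × ZMod 2 =>
      x ^ p.1.val * (x⁻¹ * z) ^ p.2.val) :
    Nonempty (↥(Subgroup.closure {x, z}) ≃* (Multiplicative (ZMod 4) × Multiplicative (ZMod 2))) := by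
  set y := x⁻¹ * z with hyz
  have hcom : Commute x y := hc
  set φ := phi x y hx hy hcom with hφ
  have hzy : z = x * y := (mul_inv_cancel_left x z).symm
  have hφinj : Function.Injective φ := fun a b h => hinj h
  have hr : Subgroup.closure {x, z} = φ.range := by
    apply le_antisymm
    · rw [Subgroup.closure_le]
      have h1 : (1 : ZMod 4).val = 1 := by decide
      have h2 : (1 : ZMod 2).val = 1 := by decide
      rintro w hw
      rcases hw with hw | hw <;> rw [hw]
      · exact ⟨(Multiplicative.ofAdd 1, 1),
          show x ^ (1 : ZMod 4).val * y ^ (0 : ZMod 2).val = x by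
            simp [h1]⟩
      · exact ⟨(Multiplicative.ofAdd 1, Multiplicative.ofAdd 1),
          show x ^ (1 : ZMod 4).val * y ^ (1 : ZMod 2).val = z by
            simp [h1, h2, hzy]⟩
    · rintro w ⟨⟨a, b⟩, rfl⟩
      have hxm : x ∈ Subgroup.closure ({x, z} : Set (Equiv.Perm G)) :=
        Subgroup.subset_closure (Set.mem_insert _ _)
      have hzm : z ∈ Subgroup.closure ({x, z} : Set (Equiv.Perm G)) :=
        Subgroup.subset_closure (by simp)
      have hym : y ∈ Subgroup.closure ({x, z} : Set (Equiv.Perm G)) :=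
        mul_mem (inv_mem hxm) hzm
      exact mul_mem (pow_mem hxm _) (pow_mem hym _)
  exact ⟨(MulEquiv.subgroupCongr hr).trans (MonoidHom.ofInjective hφinj).symm⟩

theorem stmt4 (s t : G) (hs : s ∈ ({σ, τ, σ * τ} : Set G)) (ht : t ∈ ({σ, τ, σ * τ} : Set G))
    (hst : s ≠ t) :
    Nonempty (↥(Ast s t) ≃* (Multiplicative (ZMod 4) × Multiplicative (ZMod 2))) := by
  simp only [Set.mem_insert_iff, Set.mem_singleton_iff] at hs ht
  rcases hs with rfl | rfl | rfl <;> rcases ht with rfl | rfl | rfl <;>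
    first
      | exact absurd rfl hst
      | exact iso_of _ _ (by decide) (by decide) (by decide) (by decide)
end

section
/- Let G = Q₈, let s, t ∈ {σ, τ, στ} with s ≠ t, and let η = η_{s,t} be the 8-cycle (1, s, t, (st)⁻¹, s², s⁻¹, t⁻¹, st) in Perm(G). Then λ(s) η λ(s)⁻¹ = η³ and λ(t) η λ(t)⁻¹ = η. In particular ⟨η⟩ is normalized by λ(G). -/
lemma conj_mem (s t : G)
    (h : ∀ g : G, ∃ k : Fin 8, lam g * eta s t * (lam g)⁻¹ = (eta s t)^(k:ℕ)) :
    ∀ g : G, ∀ η ∈ Cst s t, lam g * η * (lam g)⁻¹ ∈ Cst s t := by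
  intro g η hη
  induction hη using Subgroup.closure_induction with
  | mem x hx =>
    rcases hx with rfl
    obtain ⟨k, hk⟩ := h g
    rw [hk]
    exact pow_mem (Subgroup.subset_closure (Set.mem_singleton _)) _
  | one =>
    rw [mul_one, mul_inv_cancel]
    exact one_mem _
  | mul a b _ _ ha hb =>
    have : lam g * (a * b) * (lam g)⁻¹ = (lam g * a * (lam g)⁻¹) * (lam g * b * (lam g)⁻¹) := by
      group
    rw [this]; exact mul_mem ha hb
  | inv a _ ha =>
    have : lam g * a⁻¹ * (lam g)⁻¹ = (lam g * a * (lam g)⁻¹)⁻¹ := by group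
    rw [this]; exact inv_mem ha

theorem stmt7 (s t : G) (hs : s ∈ ({σ, τ, σ * τ} : Set G)) (ht : t ∈ ({σ, τ, σ * τ} : Set G))
    (hst : s ≠ t) :
    lam s * eta s t * (lam s)⁻¹ = (eta s t)^3 ∧
      lam t * eta s t * (lam t)⁻¹ = eta s t ∧
      (∀ g : G, ∀ η ∈ Cst s t, lam g * η * (lam g)⁻¹ ∈ Cst s t) := by
    rcases hs with rfl | rfl | rfl <;> rcases ht with rfl | rfl | rfl <;>
      first
      | exact absurd rfl hst
      | exact ⟨by decide, by decide, conj_mem _ _ (by decide)⟩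
end

section
/- Let G = Q₈. Every regular subgroup N of Perm(G) from the list {ρ(G), λ(G), E_{s,t}, A_{s,t}, C_{s,t}, D_{s,λ}, D_{s,ρ}} (for all valid choices of s, t) contains the central element ρ(σ²). Equivalently, Z(ρ(G)) ⊆ ρ(G) ∩ N for each such N. -/
lemma lam_sq (s : G) (hs : s ∈ ({σ, τ, σ * τ} : Set G)) : lam s ^ 2 = rho (σ^2) := by
  rcases hs with rfl | rfl | rfl <;> decide

lemma rho_sq (s : G) (hs : s ∈ ({σ, τ, σ * τ} : Set G)) : rho s ^ 2 = rho (σ^2) := by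
  rcases hs with rfl | rfl | rfl <;> decide

lemma eta_pow (s t : G) (hs : s ∈ ({σ, τ, σ * τ} : Set G))
    (ht : t ∈ ({σ, τ, σ * τ} : Set G)) (hst : s ≠ t) : eta s t ^ 4 = rho (σ^2) := by
  rcases hs with rfl | rfl | rfl <;> rcases ht with rfl | rfl | rfl <;>
    first | exact absurd rfl hst | decide

theorem stmt9 :
    rho (σ^2) ∈ rhoG ∧ rho (σ^2) ∈ lamG ∧
      (∀ s t : G, s ∈ ({σ, τ} : Set G) → t ∈ ({σ, τ} : Set G) → s ≠ t →
        rho (σ^2) ∈ Est s t) ∧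
      (∀ s t : G, s ∈ ({σ, τ, σ * τ} : Set G) → t ∈ ({σ, τ, σ * τ} : Set G) → s ≠ t →
        rho (σ^2) ∈ Ast s t ∧ rho (σ^2) ∈ Cst s t) ∧
      (∀ s t : G, s ∈ ({σ, τ, σ * τ} : Set G) → t ∈ ({σ, τ, σ * τ} : Set G) → t ≠ s →
        rho (σ^2) ∈ Dsl s t ∧ rho (σ^2) ∈ Dsr s t) := by
  refine ⟨?_, ?_, ?_, ?_, ?_⟩
  · exact Subgroup.subset_closure ⟨σ^2, rfl⟩
  · have h : rho (σ^2) = lam (σ^2) := by decide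
    rw [h]; exact Subgroup.subset_closure ⟨σ^2, rfl⟩
  · intro s t hs ht hst
    have h : lam (s^2) = rho (σ^2) := by
      rcases hs with rfl | rfl <;> decide
    rw [← h]
    exact Subgroup.subset_closure (by simp)
  · intro s t hs ht hst
    constructor
    · rw [← lam_sq s hs]
      exact pow_mem (Subgroup.subset_closure (by simp)) 2
    · rw [← eta_pow s t hs ht hst]
      exact pow_mem (Subgroup.subset_closure (by simp)) 4
  · intro s t hs ht hts
    constructor
    · rw [← lam_sq s hs]
      exact pow_mem (Subgroup.subset_closure (by simp)) 2
    · rw [← rho_sq s hs]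
      exact pow_mem (Subgroup.subset_closure (by simp)) 2
end

section
/- Let G = Q₈ act on E_{σ,τ} and E_{τ,σ} by conjugation via λ (i.e., g·η = λ(g) η λ(g)⁻¹). Then there exists a G-equivariant group isomorphism f : E_{σ,τ} → E_{τ,σ} given on generators by λ(σ)ρ(τ) ↦ λ(σ)ρ((στ)⁻¹), λ(σ²) ↦ λ(σ²), λ(τ)ρ(στ) ↦ λ(τ)ρ(σ). -/
/-- The conjugating permutation. -/
def pf (g : G) : G :=
  if g = .a 1 then .xa 1 else if g = .a 3 then .xa 3
  else if g = .xa 0 then .a 1 else if g = .xa 1 then .xa 2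
  else if g = .xa 2 then .a 3 else if g = .xa 3 then .xa 0
  else g
def pg (g : G) : G :=
  if g = .xa 1 then .a 1 else if g = .xa 3 then .a 3
  else if g = .a 1 then .xa 0 else if g = .xa 2 then .xa 1
  else if g = .a 3 then .xa 2 else if g = .xa 0 then .xa 3
  else g
def pp : Equiv.Perm G := ⟨pf, pg, by decide, by decide⟩

lemma himg : (Est σ τ).map ((MulAut.conj pp : Equiv.Perm G ≃* Equiv.Perm G) :
    Equiv.Perm G →* Equiv.Perm G) = Est τ σ := by
  unfold Est
  rw [MonoidHom.map_closure]
  congr 1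
  rw [Set.image_insert_eq, Set.image_insert_eq, Set.image_singleton]
  have e1 : ((MulAut.conj pp : Equiv.Perm G ≃* Equiv.Perm G) :
      Equiv.Perm G →* Equiv.Perm G) (lam σ * rho τ) = lam σ * rho (τ * σ) := by decide
  have e2 : ((MulAut.conj pp : Equiv.Perm G ≃* Equiv.Perm G) :
      Equiv.Perm G →* Equiv.Perm G) (lam (σ^2)) = lam (τ^2) := by decide
  have e3 : ((MulAut.conj pp : Equiv.Perm G ≃* Equiv.Perm G) :
      Equiv.Perm G →* Equiv.Perm G) (lam τ * rho (σ * τ)) = lam τ * rho σ := by decide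
  rw [e1, e2, e3]
  ext x
  simp only [Set.mem_insert_iff, Set.mem_singleton_iff]
  tauto

lemma key_s10 : ∀ η ∈ Est σ τ, ∀ g : G,
    pp * (lam g * η * (lam g)⁻¹) * pp⁻¹ = lam g * (pp * η * pp⁻¹) * (lam g)⁻¹ := by
  intro η hη
  induction hη using Subgroup.closure_induction with
  | mem x hx =>
      rcases hx with h | h | h <;> subst h <;> decide
  | one => intro g; group
  | mul x y _ _ hx hy =>
      intro g
      calc pp * (lam g * (x * y) * (lam g)⁻¹) * pp⁻¹
          = (pp * (lam g * x * (lam g)⁻¹) * pp⁻¹) *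
            (pp * (lam g * y * (lam g)⁻¹) * pp⁻¹) := by group
        _ = (lam g * (pp * x * pp⁻¹) * (lam g)⁻¹) *
            (lam g * (pp * y * pp⁻¹) * (lam g)⁻¹) := by rw [hx g, hy g]
        _ = lam g * (pp * (x * y) * pp⁻¹) * (lam g)⁻¹ := by group
  | inv x _ hx =>
      intro g
      calc pp * (lam g * x⁻¹ * (lam g)⁻¹) * pp⁻¹
          = (pp * (lam g * x * (lam g)⁻¹) * pp⁻¹)⁻¹ := by group
        _ = (lam g * (pp * x * pp⁻¹) * (lam g)⁻¹)⁻¹ := by rw [hx g]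
        _ = lam g * (pp * x⁻¹ * pp⁻¹) * (lam g)⁻¹ := by group

noncomputable def ff : ↥(Est σ τ) ≃* ↥(Est τ σ) :=
  ((MulAut.conj pp : Equiv.Perm G ≃* Equiv.Perm G).subgroupMap
    (Est σ τ)).trans (MulEquiv.subgroupCongr himg)

lemma ff_apply (x : Equiv.Perm G) (hx : x ∈ Est σ τ) :
    (ff ⟨x, hx⟩ : Equiv.Perm G) = pp * x * pp⁻¹ := rfl

theorem stmt10 :
    ∃ f : ↥(Est σ τ) ≃* ↥(Est τ σ), Equivariant f ∧
      (∀ h : lam σ * rho τ ∈ Est σ τ,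
        (f ⟨lam σ * rho τ, h⟩ : Equiv.Perm G) = lam σ * rho (σ * τ)⁻¹) ∧
      (∀ h : lam (σ^2) ∈ Est σ τ,
        (f ⟨lam (σ^2), h⟩ : Equiv.Perm G) = lam (σ^2)) ∧
      (∀ h : lam τ * rho (σ * τ) ∈ Est σ τ,
        (f ⟨lam τ * rho (σ * τ), h⟩ : Equiv.Perm G) = lam τ * rho σ) := by
  refine ⟨ff, ?_, ?_, ?_, ?_⟩
  · intro g η hη hη'
    rw [ff_apply, ff_apply, key_s10 η hη g]
  · intro h
    rw [ff_apply]
    decide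
  · intro h
    rw [ff_apply]
    decide
  · intro h
    rw [ff_apply]
    decide
end

section
/- Let G = Q₈ and let C_{s,t} = ⟨η_{s,t}⟩ where η_{s,t} is the 8-cycle (1, s, t, (st)⁻¹, s², s⁻¹, t⁻¹, st), for distinct s, t ∈ {σ, τ, στ}, with G acting by conjugation via λ. Then there exists a G-equivariant group isomorphism C_{s,t} → C_{s′,t′} if and only if t = t′. -/
namespace Subgroup

variable {P : Type*} [Group P]

theorem mem_zpowers_mk_of_closure_singleton (x : P) (z : closure {x}) :
    z ∈ zpowers (⟨x, subset_closure rfl⟩ : closure {x}) := by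
  obtain ⟨n, hn⟩ := mem_closure_singleton.mp z.2
  exact ⟨n, Subtype.ext hn⟩

theorem conj_eq_of_mem_closure_singleton {c y : P} (hcy : c * y * c⁻¹ = y) {z : P}
    (hz : z ∈ closure {y}) : c * z * c⁻¹ = z := by
  obtain ⟨n, rfl⟩ := mem_closure_singleton.mp hz
  rw [← conj_zpow, hcy]

end Subgroup

namespace MulEquiv

variable {P : Type*} [Group P] {H K : Subgroup P}

open Subgroup in
theorem map_conj_of_conj_gen_eq_zpow (f : H ≃* K) {x : H} (hx : ∀ z : H, z ∈ zpowers x)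
    {c : P} {k : ℤ} (hcx : c * x * c⁻¹ = (x : P) ^ k) (hcf : c * f x * c⁻¹ = (f x : P) ^ k)
    {η : P} (hη : η ∈ H) (hη' : c * η * c⁻¹ ∈ H) :
    (f ⟨c * η * c⁻¹, hη'⟩ : P) = c * f ⟨η, hη⟩ * c⁻¹ := by
  obtain ⟨n, hn⟩ := mem_zpowers_iff.mp (hx ⟨η, hη⟩)
  have hconj : (⟨c * η * c⁻¹, hη'⟩ : H) = x ^ (k * n) := by
    ext
    rw [SubgroupClass.coe_zpow, zpow_mul, ← hcx, conj_zpow, ← SubgroupClass.coe_zpow, hn]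
  rw [hconj, ← hn, map_zpow, map_zpow, SubgroupClass.coe_zpow, SubgroupClass.coe_zpow, zpow_mul,
    ← hcf, conj_zpow]

theorem conj_eq_of_map_conj (f : H ≃* K) {c : P}
    (hf : ∀ η (hη : η ∈ H) (hη' : c * η * c⁻¹ ∈ H),
      (f ⟨c * η * c⁻¹, hη'⟩ : P) = c * f ⟨η, hη⟩ * c⁻¹)
    (hK : ∀ y ∈ K, c * y * c⁻¹ = y) {η : P} (hη : η ∈ H) (hη' : c * η * c⁻¹ ∈ H) :
    c * η * c⁻¹ = η := by
  have hfη := hf η hη hη'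
  rw [hK _ (f _).2] at hfη
  exact congrArg Subtype.val (f.injective (Subtype.ext hfη))

end MulEquiv

set_option maxRecDepth 40000 in
theorem orderOf_eta {s t : G} (hs : s ∈ ({σ, τ, σ * τ} : Set G))
    (ht : t ∈ ({σ, τ, σ * τ} : Set G)) (hst : s ≠ t) : orderOf (eta s t) = 8 := by
  refine orderOf_eq_prime_pow (p := 2) (n := 2) ?_ ?_ <;> revert s t <;> decide

set_option maxRecDepth 40000 in
/-- The centralizer of `t` in `Q₈` is `⟨t⟩`, so `G` acts on `C_{s,t}` through `G ⧸ ⟨t⟩`. -/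
theorem lam_conj_eta {s t : G} (hs : s ∈ ({σ, τ, σ * τ} : Set G))
    (ht : t ∈ ({σ, τ, σ * τ} : Set G)) (hst : s ≠ t) (g : G) :
    lam g * eta s t * (lam g)⁻¹ = eta s t ^ (if g * t = t * g then (1 : ℤ) else 3) := by
  revert s t g; decide

theorem mul_ne_mul_of_ne {t t' : G} (ht : t ∈ ({σ, τ, σ * τ} : Set G))
    (ht' : t' ∈ ({σ, τ, σ * τ} : Set G)) (htt' : t ≠ t') : t' * t ≠ t * t' := by
  revert t t'; decide

theorem eta_mem_Cst (s t : G) : eta s t ∈ Cst s t := Subgroup.subset_closure rfl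

theorem eta_zpow_three_ne {s t : G} (hs : s ∈ ({σ, τ, σ * τ} : Set G))
    (ht : t ∈ ({σ, τ, σ * τ} : Set G)) (hst : s ≠ t) : eta s t ^ (3 : ℤ) ≠ eta s t := by
  intro h
  have h31 := zpow_eq_zpow_iff_modEq.mp (h.trans (zpow_one _).symm)
  rw [orderOf_eta hs ht hst] at h31
  exact absurd h31 (by decide)

theorem lam_conj_eq_self_of_mem_Cst {s t : G} (hs : s ∈ ({σ, τ, σ * τ} : Set G))
    (ht : t ∈ ({σ, τ, σ * τ} : Set G)) (hst : s ≠ t) {y : Equiv.Perm G} (hy : y ∈ Cst s t) :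
    lam t * y * (lam t)⁻¹ = y :=
  Subgroup.conj_eq_of_mem_closure_singleton (by simpa using lam_conj_eta hs ht hst t) hy

theorem not_equivariant_of_ne {s t s' t' : G} (hs : s ∈ ({σ, τ, σ * τ} : Set G))
    (ht : t ∈ ({σ, τ, σ * τ} : Set G)) (hs' : s' ∈ ({σ, τ, σ * τ} : Set G))
    (ht' : t' ∈ ({σ, τ, σ * τ} : Set G)) (hst : s ≠ t) (hst' : s' ≠ t') (htt' : t ≠ t')
    (f : Cst s t ≃* Cst s' t') : ¬ Equivariant f := by
  intro hf
  have hconj := lam_conj_eta hs ht hst t'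
  rw [if_neg (mul_ne_mul_of_ne ht ht' htt')] at hconj
  refine eta_zpow_three_ne hs ht hst (hconj ▸ f.conj_eq_of_map_conj (hf t') ?_ (eta_mem_Cst s t)
    (hconj ▸ zpow_mem (eta_mem_Cst s t) 3))
  exact fun y => lam_conj_eq_self_of_mem_Cst hs' ht' hst'

theorem exists_equivariant_mulEquiv {s s' t : G} (hs : s ∈ ({σ, τ, σ * τ} : Set G))
    (hs' : s' ∈ ({σ, τ, σ * τ} : Set G)) (ht : t ∈ ({σ, τ, σ * τ} : Set G)) (hst : s ≠ t)
    (hst' : s' ≠ t) : ∃ f : Cst s t ≃* Cst s' t, Equivariant f := by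
  have hord : orderOf (⟨eta s t, eta_mem_Cst s t⟩ : Cst s t)
      = orderOf (⟨eta s' t, eta_mem_Cst s' t⟩ : Cst s' t) := by
    rw [Subgroup.orderOf_mk, Subgroup.orderOf_mk, orderOf_eta hs ht hst, orderOf_eta hs' ht hst']
  let f := mulEquivOfOrderOfEq (Subgroup.mem_zpowers_mk_of_closure_singleton _)
    (Subgroup.mem_zpowers_mk_of_closure_singleton _) hord
  have hfη : f ⟨eta s t, eta_mem_Cst s t⟩ = ⟨eta s' t, eta_mem_Cst s' t⟩ :=
    mulEquivOfOrderOfEq_apply_gen _ _ hord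
  refine ⟨f, fun g η hη hη' => f.map_conj_of_conj_gen_eq_zpow
    (Subgroup.mem_zpowers_mk_of_closure_singleton _) (lam_conj_eta hs ht hst g) ?_ hη hη'⟩
  rw [hfη]
  exact lam_conj_eta hs' ht hst' g

theorem stmt12 (s t s' t' : G)
    (hs : s ∈ ({σ, τ, σ * τ} : Set G)) (ht : t ∈ ({σ, τ, σ * τ} : Set G))
    (hs' : s' ∈ ({σ, τ, σ * τ} : Set G)) (ht' : t' ∈ ({σ, τ, σ * τ} : Set G))
    (hst : s ≠ t) (hst' : s' ≠ t') :
    (∃ f : ↥(Cst s t) ≃* ↥(Cst s' t'), Equivariant f) ↔ t = t' := by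
  constructor
  · rintro ⟨f, hf⟩
    by_contra htt'
    exact not_equivariant_of_ne hs ht hs' ht' hst hst' htt' f hf
  · rintro rfl
    exact exists_equivariant_mulEquiv hs hs' ht hst hst'
end

section
/- Let G = Q₈ and let s, s′ ∈ {σ, τ, στ} with s ≠ s′. With G acting on subgroups of Perm(G) by conjugation via λ, there is no G-equivariant group isomorphism between D_{s,λ} and D_{s′,λ}, nor between D_{s,λ} and D_{s′,ρ} for any s, s′. -/
set_option maxRecDepth 100000
set_option maxHeartbeats 1000000

/-- The eight elements of the dihedral group `Dsl s t`. -/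
def Lsl (s t : G) : List (Equiv.Perm G) :=
  [1, lam s, lam s ^ 2, lam s ^ 3, lam t * rho s, lam s * (lam t * rho s),
   lam s ^ 2 * (lam t * rho s), lam s ^ 3 * (lam t * rho s)]

/-- The eight elements of the dihedral group `Dsr s t`. -/
def Lsr (s t : G) : List (Equiv.Perm G) :=
  [1, rho s, rho s ^ 2, rho s ^ 3, lam s * rho t, rho s * (lam s * rho t),
   rho s ^ 2 * (lam s * rho t), rho s ^ 3 * (lam s * rho t)]

/-- A decidable package of hypotheses: `L` enumerates a subgroup containing `a, b`,
and no element of `L` that commutes with `lam s` and is inverted by `lam t`-conjugation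
has order four; moreover `lam s` has order four and is inverted by `lam t`-conjugation. -/
def HypB (s t : G) (a b : Equiv.Perm G) (L : List (Equiv.Perm G)) : Bool :=
  ((1 : Equiv.Perm G) ∈ L) &&
  (L.all fun x => L.all fun y => x * y ∈ L) &&
  (L.all fun x => x⁻¹ ∈ L) &&
  (a ∈ L) && (b ∈ L) &&
  (L.all fun y => !(lam s * y == y * lam s) || !(lam t * y * (lam t)⁻¹ == y⁻¹) || (y * y == 1)) &&
  !(lam s * lam s == 1) &&
  (lam t * lam s * (lam t)⁻¹ == (lam s)⁻¹)

theorem key_s14 (s t : G) (a b : Equiv.Perm G) (L : List (Equiv.Perm G))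
    (H : HypB s t a b L = true) :
    ¬ ∃ f : ↥(Dsl s t) ≃* ↥(Subgroup.closure {a, b}), Equivariant f := by
  simp only [HypB, Bool.and_eq_true, List.all_eq_true, decide_eq_true_eq, Bool.or_eq_true,
    Bool.not_eq_true', beq_iff_eq, beq_eq_false_iff_ne, ne_eq] at H
  obtain ⟨⟨⟨⟨⟨⟨⟨h1, hmul⟩, hinv⟩, ha⟩, hb⟩, hcent⟩, hs2⟩, hts⟩ := H
  rintro ⟨f, hf⟩
  have hmemS : lam s ∈ Dsl s t := Subgroup.subset_closure (Set.mem_insert _ _)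
  set p : ↥(Dsl s t) := ⟨lam s, hmemS⟩ with hp
  let K : Subgroup (Equiv.Perm G) :=
    { carrier := {x | x ∈ L}
      one_mem' := h1
      mul_mem' := fun hx hy => hmul _ hx _ hy
      inv_mem' := fun hx => hinv _ hx }
  have hle : Subgroup.closure ({a, b} : Set (Equiv.Perm G)) ≤ K := by
    apply (Subgroup.closure_le K).2
    intro y hy
    rcases hy with rfl | rfl
    · exact ha
    · exact hb
  have hxL : (f p : Equiv.Perm G) ∈ L := hle (f p).2
  have e1 : lam s * lam s * (lam s)⁻¹ = lam s := by group
  have hm1 : lam s * lam s * (lam s)⁻¹ ∈ Dsl s t := by rw [e1]; exact hmemS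
  have hc1 := hf s (lam s) hmemS hm1
  rw [show (⟨lam s * lam s * (lam s)⁻¹, hm1⟩ : ↥(Dsl s t)) = p from Subtype.ext e1] at hc1
  have hcomm : lam s * (f p : Equiv.Perm G) = (f p : Equiv.Perm G) * lam s :=
    (eq_mul_inv_iff_mul_eq.mp hc1).symm
  have hm2 : lam t * lam s * (lam t)⁻¹ ∈ Dsl s t := by rw [hts]; exact inv_mem hmemS
  have hc2 := hf t (lam s) hmemS hm2
  have ep : (⟨lam t * lam s * (lam t)⁻¹, hm2⟩ : ↥(Dsl s t)) = p⁻¹ := Subtype.ext hts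
  rw [ep, map_inv] at hc2
  have hconj : lam t * (f p : Equiv.Perm G) * (lam t)⁻¹ = ((f p : Equiv.Perm G))⁻¹ := by
    rw [← hc2]; rfl
  rcases hcent _ hxL with (h | h) | h
  · exact h hcomm
  · exact h hconj
  · have hfpp : f (p * p) = 1 := by
      apply Subtype.ext
      rw [map_mul]
      push_cast
      simpa using h
    have hpp : p * p = 1 := f.injective (by rw [hfpp, map_one])
    apply hs2
    simpa using congrArg Subtype.val hpp

theorem keyL (s t s' t' : G) (H : HypB s t (lam s') (lam t' * rho s') (Lsl s' t') = true) :
    ¬ ∃ f : ↥(Dsl s t) ≃* ↥(Dsl s' t'), Equivariant f :=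
  key_s14 s t (lam s') (lam t' * rho s') (Lsl s' t') H

theorem keyR (s t s' t' : G) (H : HypB s t (rho s') (lam s' * rho t') (Lsr s' t') = true) :
    ¬ ∃ f : ↥(Dsl s t) ≃* ↥(Dsr s' t'), Equivariant f :=
  key_s14 s t (rho s') (lam s' * rho t') (Lsr s' t') H

theorem stmt14 :
    (∀ s s' t t' : G, s ∈ ({σ, τ, σ * τ} : Set G) → s' ∈ ({σ, τ, σ * τ} : Set G) →
      t ∈ ({σ, τ, σ * τ} : Set G) → t' ∈ ({σ, τ, σ * τ} : Set G) →
      t ≠ s → t' ≠ s' → s ≠ s' →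
        ¬ ∃ f : ↥(Dsl s t) ≃* ↥(Dsl s' t'), Equivariant f) ∧
    (∀ s s' t t' : G, s ∈ ({σ, τ, σ * τ} : Set G) → s' ∈ ({σ, τ, σ * τ} : Set G) →
      t ∈ ({σ, τ, σ * τ} : Set G) → t' ∈ ({σ, τ, σ * τ} : Set G) →
      t ≠ s → t' ≠ s' →
        ¬ ∃ f : ↥(Dsl s t) ≃* ↥(Dsr s' t'), Equivariant f) := by
  constructor
  · intro s s' t t' hs hs' ht ht' hts' ht's' hss'
    simp only [Set.mem_insert_iff, Set.mem_singleton_iff] at hs hs' ht ht'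
    rcases hs with rfl | rfl | rfl <;> rcases hs' with rfl | rfl | rfl <;>
      rcases ht with rfl | rfl | rfl <;> rcases ht' with rfl | rfl | rfl <;>
    first
      | exact absurd rfl hts'
      | exact absurd rfl ht's'
      | exact absurd rfl hss'
      | exact keyL _ _ _ _ (by decide)
  · intro s s' t t' hs hs' ht ht' hts' ht's'
    simp only [Set.mem_insert_iff, Set.mem_singleton_iff] at hs hs' ht ht'
    rcases hs with rfl | rfl | rfl <;> rcases hs' with rfl | rfl | rfl <;>
      rcases ht with rfl | rfl | rfl <;> rcases ht' with rfl | rfl | rfl <;>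
    first
      | exact absurd rfl hts'
      | exact absurd rfl ht's'
      | exact keyR _ _ _ _ (by decide)
end

section
/- Let F be a field of characteristic 0 and let a, b ∈ F× be such that the quadratic form a x₁² + b x₂² + ab x₃² over F is equivalent to the form x₁² + x₂² + x₃². Then the quaternion algebras (-a, -b)_F and (-1, -1)_F are isomorphic as F-algebras. -/
/-!
An isometry from `⟨a, b, ab⟩` to the sum of three squares sends the first two standard basis
vectors to orthogonal `u, v ∈ F³` with `u ⬝ u = a`, `v ⬝ v = b`. Read as pure quaternions in
`(-1, -1)_F`, where `p q = -(p ⬝ q) + p × q`, they satisfy `u² = -a`, `v² = -b`, `u v = -v u`, so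
they define an algebra map `(-a, -b)_F → (-1, -1)_F`. It is injective because a quaternion algebra
with nonzero parameters is simple (conjugating by `i` and `j` projects onto the real part), hence
bijective since both sides have dimension four.
-/

open QuadraticMap Matrix Quaternion

theorem QuadraticMap.polar_weightedSumSquares {ι R : Type*} [Fintype ι] [CommRing R]
    (w : ι → R) (x y : ι → R) :
    polar (weightedSumSquares R w) x y = 2 * ∑ i, w i * x i * y i := by
  simp only [polar, weightedSumSquares_apply, smul_eq_mul, Pi.add_apply, Finset.mul_sum,
    ← Finset.sum_sub_distrib]
  exact Finset.sum_congr rfl fun i _ => by ring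

theorem QuadraticMap.IsometryEquiv.polar_map {R M₁ M₂ N : Type*} [CommRing R]
    [AddCommGroup M₁] [AddCommGroup M₂] [AddCommGroup N] [Module R M₁] [Module R M₂] [Module R N]
    {Q₁ : QuadraticMap R M₁ N} {Q₂ : QuadraticMap R M₂ N} (e : Q₁.IsometryEquiv Q₂) (x y : M₁) :
    polar Q₂ (e x) (e y) = polar Q₁ x y := by
  simp only [polar, ← map_add, e.map_app]

theorem dotProduct_isometryEquiv_single {ι κ F : Type*} [Fintype ι] [DecidableEq ι] [Fintype κ]
    [Field F] (h2 : (2 : F) ≠ 0) {w : ι → F}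
    (e : (weightedSumSquares F w).IsometryEquiv (weightedSumSquares F (1 : κ → F))) (i j : ι) :
    e (Pi.single i 1) ⬝ᵥ e (Pi.single j 1) = if i = j then w i else 0 := by
  have := e.polar_map (Pi.single i 1) (Pi.single j 1)
  simp only [polar_weightedSumSquares, Pi.one_apply, one_mul, Pi.single_apply] at this
  rw [dotProduct, mul_left_cancel₀ h2 this]
  rcases eq_or_ne i j with rfl | hij
  · simp
  · simp [hij, hij.symm]

namespace QuaternionAlgebra

variable {R : Type*} [CommRing R]

def ofPure (u : Fin 3 → R) : ℍ[R,-1,0,-1] := ⟨0, u 0, u 1, u 2⟩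

@[simp]
theorem ofPure_zero : ofPure (0 : Fin 3 → R) = 0 := rfl

theorem ofPure_mul_ofPure (u v : Fin 3 → R) :
    ofPure u * ofPure v = -(u ⬝ᵥ v) • 1 + ofPure (u ⨯₃ v) := by
  ext <;> simp [ofPure, cross_apply, dotProduct, Fin.sum_univ_three] <;> ring

def basisOfOrthogonal {a b : R} {u v : Fin 3 → R} (hu : u ⬝ᵥ u = a) (hv : v ⬝ᵥ v = b)
    (huv : u ⬝ᵥ v = 0) : Basis ℍ[R,-1,0,-1] (-a) 0 (-b) where
  i := ofPure u
  j := ofPure v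
  k := ofPure (u ⨯₃ v)
  i_mul_i := by rw [ofPure_mul_ofPure, cross_self, hu]; simp
  j_mul_j := by rw [ofPure_mul_ofPure, cross_self, hv]; simp
  i_mul_j := by rw [ofPure_mul_ofPure, huv]; simp
  j_mul_i := by rw [ofPure_mul_ofPure, dotProduct_comm, huv, ← cross_anticomm]; simp [ofPure]

/-- Every two-sided ideal containing `x` thus contains the scalar `4 c₁ c₃ x.re`. -/
theorem conj_i_conj_j_eq_coe_re {c₁ c₃ : R} (x : ℍ[R,c₁,c₃]) :
    c₃ • (c₁ • x + (Basis.self R).i * x * (Basis.self R).i) +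
      (Basis.self R).j * (c₁ • x + (Basis.self R).i * x * (Basis.self R).i) * (Basis.self R).j =
      ((4 * c₁ * c₃ * x.re : R) : ℍ[R,c₁,c₃]) := by
  ext <;> simp <;> ring

theorem algHom_injective {F A : Type*} [Field F] [Ring A] [Nontrivial A] [Algebra F A]
    (h2 : (2 : F) ≠ 0) {c₁ c₃ : F} (hc₁ : c₁ ≠ 0) (hc₃ : c₃ ≠ 0) (f : ℍ[F,c₁,c₃] →ₐ[F] A) :
    Function.Injective f := by
  have re_eq_zero (x : ℍ[F,c₁,c₃]) (hx : f x = 0) : x.re = 0 := by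
    have : algebraMap F A (4 * c₁ * c₃ * x.re) = 0 := by
      rw [← f.commutes, coe_algebraMap, ← conj_i_conj_j_eq_coe_re]
      simp [hx]
    rw [map_eq_zero_iff _ (algebraMap F A).injective, show (4 : F) = 2 * 2 by norm_num] at this
    simpa [h2, hc₁, hc₃] using this
  refine (injective_iff_map_eq_zero f).mpr fun x hx => ?_
  have hmul (y : ℍ[F,c₁,c₃]) : f (y * x) = 0 := by rw [map_mul, hx, mul_zero]
  have hI : c₁ * x.imI = 0 := by simpa using re_eq_zero _ (hmul (Basis.self F).i)
  have hJ : c₃ * x.imJ = 0 := by simpa using re_eq_zero _ (hmul (Basis.self F).j)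
  have hK : c₁ * c₃ * x.imK = 0 := by simpa using re_eq_zero _ (hmul (Basis.self F).k)
  ext
  · exact re_eq_zero x hx
  · simpa [hc₁] using hI
  · simpa [hc₃] using hJ
  · simpa [hc₁, hc₃] using hK

noncomputable def Basis.liftEquiv {F A : Type*} [Field F] [Ring A] [Algebra F A]
    (h2 : (2 : F) ≠ 0) {c₁ c₃ : F} (hc₁ : c₁ ≠ 0) (hc₃ : c₃ ≠ 0)
    (hA : Module.finrank F A = 4) (B : Basis A c₁ 0 c₃) : ℍ[F,c₁,c₃] ≃ₐ[F] A :=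
  have hA_pos : 0 < Module.finrank F A := by omega
  have := Module.finite_of_finrank_pos hA_pos
  have := Module.nontrivial_of_finrank_pos hA_pos
  have hinj := algHom_injective h2 hc₁ hc₃ B.liftHom
  AlgEquiv.ofBijective B.liftHom ⟨hinj, (LinearMap.injective_iff_surjective_of_finrank_eq_finrank
    (by rw [finrank_eq_four, hA]) (f := B.liftHom.toLinearMap)).mp hinj⟩

end QuaternionAlgebra

theorem stmt15 (F : Type) [Field F] [CharZero F] (a b : F) (ha : a ≠ 0) (hb : b ≠ 0)
    (hform : (QuadraticMap.weightedSumSquares F ![a, b, a * b]).Equivalent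
      (QuadraticMap.weightedSumSquares F ![(1 : F), 1, 1])) :
    Nonempty (QuaternionAlgebra F (-a) 0 (-b) ≃ₐ[F] QuaternionAlgebra F (-1) 0 (-1)) := by
  obtain ⟨e⟩ := hform
  rw [show ![(1 : F), 1, 1] = 1 by ext i; fin_cases i <;> rfl] at e
  have hdot := dotProduct_isometryEquiv_single two_ne_zero e
  have hu : e (Pi.single 0 1) ⬝ᵥ e (Pi.single 0 1) = a := by simpa using hdot 0 0
  have hv : e (Pi.single 1 1) ⬝ᵥ e (Pi.single 1 1) = b := by simpa using hdot 1 1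
  have huv : e (Pi.single 0 1) ⬝ᵥ e (Pi.single 1 1) = 0 := by simpa using hdot 0 1
  exact ⟨(QuaternionAlgebra.basisOfOrthogonal hu hv huv).liftEquiv two_ne_zero
    (neg_ne_zero.mpr ha) (neg_ne_zero.mpr hb) (QuaternionAlgebra.finrank_eq_four _ _ _)⟩
end

section
/- Let F be a field of characteristic 0 and let a, b ∈ F× be such that (-a, -b)_F ≅ (-1, -1)_F as F-algebras. Then (-a, b)_F ≅ (-1, a)_F as F-algebras. -/
/-!
An isomorphism `ℍ[F,-a,-b] ≃ₐ ℍ[F]` sends `i, j` to anticommuting quaternions, which are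
automatically pure; writing them as vectors `x, y ∈ F³` gives `a = x ⬝ x`, `b = y ⬝ y` and
`x ⬝ y = 0`. From such vectors (with `x₁ ≠ 0`, after permuting coordinates) one writes down
anticommuting pure elements `A, B` of `ℍ[F,-1,a]` with `A² = -a` and `B² = b`. The algebra map
`ℍ[F,-a,b] → ℍ[F,-1,a]` they define preserves the nondegenerate trace form `re (x * y)`, so it is
injective, hence bijective by dimension count.
-/

open Quaternion

namespace QuaternionAlgebra

section CommRing

variable {R : Type*} [CommRing R] {c₁ c₂ : R}

theorem re_mul_comm (x y : ℍ[R,c₁,c₂]) : (x * y).re = (y * x).re := by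
  simp only [re_mul]; ring

theorem mul_self_eq_smul_one_of_re_eq_zero {x : ℍ[R,c₁,c₂]} (hx : x.re = 0) :
    x * x = (x * x).re • 1 := by
  ext <;> simp [hx] <;> ring

theorem mul_comm_eq_neg_of_re_mul_eq_zero {x y : ℍ[R,c₁,c₂]} (hx : x.re = 0) (hy : y.re = 0)
    (hxy : (x * y).re = 0) : y * x = -(x * y) := by
  ext
  · rw [re_neg, re_mul_comm, hxy, neg_zero]
  all_goals simp [hx, hy]; ring

theorem Basis.j_mul_i_eq_neg {A : Type*} [Ring A] [Algebra R A] (q : Basis A c₁ 0 c₂) :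
    q.j * q.i = -(q.i * q.j) := by
  rw [q.j_mul_i, q.i_mul_j, zero_smul, zero_sub]

end CommRing

section Field

variable {F : Type*} [Field F] {c₁ c₂ d₁ d₂ : F}

theorem eq_zero_of_forall_re_mul_eq_zero (hc₁ : c₁ ≠ 0) (hc₂ : c₂ ≠ 0) {x : ℍ[F,c₁,c₂]}
    (h : ∀ y, (x * y).re = 0) : x = 0 := by
  have h₀ := h 1
  have h₁ := h ⟨0, 1, 0, 0⟩
  have h₂ := h ⟨0, 0, 1, 0⟩
  have h₃ := h ⟨0, 0, 0, 1⟩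
  simp only [re_mul] at h₀ h₁ h₂ h₃
  ext <;> simp_all

variable [NeZero (2 : F)]

theorem re_mul_eq_zero_of_mul_comm_eq_neg {x y : ℍ[F,c₁,c₂]} (hxy : y * x = -(x * y)) :
    (x * y).re = 0 := by
  have h := re_mul_comm x y
  rw [hxy, re_neg] at h
  have h₂ : 2 * (x * y).re = 0 := by linear_combination h
  exact (mul_eq_zero.mp h₂).resolve_left two_ne_zero

theorem re_eq_zero_of_mul_comm_eq_neg {x y : ℍ[F,c₁,c₂]} {c : F} (hc : c ≠ 0)
    (hxy : y * x = -(x * y)) (hy : y * y = c • 1) : x.re = 0 := by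
  have h : (x * y * y).re = 0 :=
    re_mul_eq_zero_of_mul_comm_eq_neg (by rw [← mul_assoc, hxy, neg_mul])
  rw [mul_assoc, hy, mul_smul_one, re_smul, smul_eq_mul] at h
  exact (mul_eq_zero.mp h).resolve_left hc

namespace Basis

variable (q : Basis ℍ[F,d₁,d₂] c₁ 0 c₂)

theorem re_i (hc₂ : c₂ ≠ 0) : q.i.re = 0 :=
  re_eq_zero_of_mul_comm_eq_neg hc₂ q.j_mul_i_eq_neg q.j_mul_j

theorem re_j (hc₁ : c₁ ≠ 0) : q.j.re = 0 :=
  re_eq_zero_of_mul_comm_eq_neg hc₁ (by rw [q.j_mul_i_eq_neg, neg_neg])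
    (by rw [q.i_mul_i, zero_smul, add_zero])

theorem re_k : q.k.re = 0 := by
  rw [← q.i_mul_j]
  exact re_mul_eq_zero_of_mul_comm_eq_neg q.j_mul_i_eq_neg

theorem re_liftHom (hc₁ : c₁ ≠ 0) (hc₂ : c₂ ≠ 0) (x : ℍ[F,c₁,c₂]) :
    (q.liftHom x).re = x.re := by
  simp [lift, q.re_i hc₂, q.re_j hc₁, q.re_k, coe_algebraMap]

theorem liftHom_bijective (hc₁ : c₁ ≠ 0) (hc₂ : c₂ ≠ 0) : Function.Bijective q.liftHom := by
  have hinj : Function.Injective q.liftHom := by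
    refine (injective_iff_map_eq_zero _).mpr fun x hx ↦
      eq_zero_of_forall_re_mul_eq_zero hc₁ hc₂ fun y ↦ ?_
    rw [← q.re_liftHom hc₁ hc₂, map_mul, hx, zero_mul, re_zero]
  exact ⟨hinj, (LinearMap.injective_iff_surjective_of_finrank_eq_finrank
    (by rw [finrank_eq_four, finrank_eq_four]) (f := q.liftHom.toLinearMap)).mp hinj⟩

end Basis

theorem exists_sum_sq_eq_of_algEquiv_quaternion {a b : F} (ha : a ≠ 0) (hb : b ≠ 0)
    (e : ℍ[F,-a,-b] ≃ₐ[F] ℍ[F]) :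
    ∃ x₁ x₂ x₃ y₁ y₂ y₃ : F, x₁ ^ 2 + x₂ ^ 2 + x₃ ^ 2 = a ∧ y₁ ^ 2 + y₂ ^ 2 + y₃ ^ 2 = b ∧
      x₁ * y₁ + x₂ * y₂ + x₃ * y₃ = 0 := by
  let q := (Basis.self F).compHom e.toAlgHom
  have hi := q.re_i (neg_ne_zero.mpr hb)
  have hj := q.re_j (neg_ne_zero.mpr ha)
  have hii := congrArg re q.i_mul_i
  have hjj := congrArg re q.j_mul_j
  have hij := congrArg re q.i_mul_j
  simp only [Quaternion.re_mul, hi, hj, q.re_k, zero_smul, add_zero, Quaternion.re_smul,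
    Quaternion.re_one, smul_eq_mul, mul_one] at hii hjj hij
  exact ⟨q.i.imI, q.i.imJ, q.i.imK, q.j.imI, q.j.imJ, q.j.imK,
    by linear_combination -hii, by linear_combination -hjj, by linear_combination -hij⟩

theorem nonempty_algEquiv_of_sum_sq_eq {a b x₁ x₂ x₃ y₁ y₂ y₃ : F} (ha : a ≠ 0) (hb : b ≠ 0)
    (hx₁ : x₁ ≠ 0) (hxa : x₁ ^ 2 + x₂ ^ 2 + x₃ ^ 2 = a) (hyb : y₁ ^ 2 + y₂ ^ 2 + y₃ ^ 2 = b)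
    (hxy : x₁ * y₁ + x₂ * y₂ + x₃ * y₃ = 0) :
    Nonempty (ℍ[F,-a,b] ≃ₐ[F] ℍ[F,-1,a]) := by
  -- `B² = b` is Lagrange's identity for `(x₂, x₃)` and `(y₂, y₃)`, using `x₂ y₂ + x₃ y₃ = -x₁ y₁`.
  let A : ℍ[F,-1,a] := ⟨0, a / x₁, x₂ / x₁, x₃ / x₁⟩
  let B : ℍ[F,-1,a] := ⟨0, (x₂ * y₃ - x₃ * y₂) / x₁, y₃ / x₁, -(y₂ / x₁)⟩
  have hAA : (A * A).re = -a := by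
    simp only [A, re_mul]
    field_simp
    linear_combination a * hxa
  have hBB : (B * B).re = b := by
    simp only [B, re_mul]
    field_simp
    linear_combination (x₂ * y₂ + x₃ * y₃ - x₁ * y₁) * hxy - (y₂ ^ 2 + y₃ ^ 2) * hxa + x₁ ^ 2 * hyb
  have hAB : (A * B).re = 0 := by
    simp only [A, B, re_mul]
    field_simp
    ring
  let q : Basis ℍ[F,-1,a] (-a) 0 b :=
    { i := A, j := B, k := A * B
      i_mul_i := by rw [mul_self_eq_smul_one_of_re_eq_zero rfl, hAA, zero_smul, add_zero]
      j_mul_j := by rw [mul_self_eq_smul_one_of_re_eq_zero rfl, hBB]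
      i_mul_j := rfl
      j_mul_i := by rw [mul_comm_eq_neg_of_re_mul_eq_zero rfl rfl hAB, zero_smul, zero_sub] }
  exact ⟨AlgEquiv.ofBijective _ (q.liftHom_bijective (neg_ne_zero.mpr ha) hb)⟩

end Field

end QuaternionAlgebra

theorem stmt16 (F : Type) [Field F] [CharZero F] (a b : F) (ha : a ≠ 0) (hb : b ≠ 0)
    (h : Nonempty (QuaternionAlgebra F (-a) 0 (-b) ≃ₐ[F] QuaternionAlgebra F (-1) 0 (-1))) :
    Nonempty (QuaternionAlgebra F (-a) 0 b ≃ₐ[F] QuaternionAlgebra F (-1) 0 a) := by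
  obtain ⟨e⟩ := h
  obtain ⟨x₁, x₂, x₃, y₁, y₂, y₃, hxa, hyb, hxy⟩ :=
    QuaternionAlgebra.exists_sum_sq_eq_of_algEquiv_quaternion ha hb e
  have hx : x₁ ≠ 0 ∨ x₂ ≠ 0 ∨ x₃ ≠ 0 := by
    by_contra! h0
    obtain ⟨rfl, rfl, rfl⟩ := h0
    exact ha (by linear_combination -hxa)
  rcases hx with hx₁ | hx₂ | hx₃
  · exact QuaternionAlgebra.nonempty_algEquiv_of_sum_sq_eq ha hb hx₁ hxa hyb hxy
  · exact QuaternionAlgebra.nonempty_algEquiv_of_sum_sq_eq ha hb hx₂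
      (show x₂ ^ 2 + x₁ ^ 2 + x₃ ^ 2 = a by linear_combination hxa)
      (show y₂ ^ 2 + y₁ ^ 2 + y₃ ^ 2 = b by linear_combination hyb) (by linear_combination hxy)
  · exact QuaternionAlgebra.nonempty_algEquiv_of_sum_sq_eq ha hb hx₃
      (show x₃ ^ 2 + x₂ ^ 2 + x₁ ^ 2 = a by linear_combination hxa)
      (show y₃ ^ 2 + y₂ ^ 2 + y₁ ^ 2 = b by linear_combination hyb) (by linear_combination hxy)
end
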